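/- arXiv:math/0203009 — 3 statements merged into one kernel-verified Lean document; each statement's English description precedes it below -/
import Mathlib

section
/- Let T be a triangulated category and U a pre-aisle of T (a full subcategory closed under isomorphisms, under the shift X ↦ X[1], and under extensions). Then U is an aisle, i.e. (U, U^⊥[1]) is a t-structure on T, if and only if the canonical inclusion functor U ↪ T has a right adjoint. -/
open CategoryTheory Category Limits Pretriangulated

universe v u

namespace Paper

section Preadditive

variable {C : Type u} [Category.{v} C] [Preadditive C]

/-- An object `E` is compact if `Hom_C(E, -)` commutes with small coproducts:
every map from `E` to a coproduct factors through a finite subcoproduct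
(since the comparison map `⨁ᵢ Hom(E, Xᵢ) ⟶ Hom(E, ∐ᵢ Xᵢ)` is always injective,
this is equivalent to the usual definition). -/
def IsCompactObj (E : C) : Prop :=
  ∀ ⦃ι : Type v⦄ (X : ι → C) [HasCoproduct X] (f : E ⟶ ∐ X),
    ∃ (s : Finset ι) (g : ∀ i, E ⟶ X i), f = ∑ i ∈ s, g i ≫ Sigma.ι X i

end Preadditive

section Category

variable {C : Type u} [Category.{v} C] [Preadditive C]

/-- The right orthogonal `U^⊥` of a (full) subcategory `U`, given by the objects `Y`
such that `Hom(X, Y) = 0` for every `X` in `U`. -/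
def rightPerp (U : C → Prop) : C → Prop := fun Y => ∀ ⦃X : C⦄, U X → ∀ (f : X ⟶ Y), f = 0

end Category

section Triangulated

variable {C : Type u} [Category.{v} C] [Preadditive C] [HasZeroObject C] [HasShift C ℤ]
  [∀ (n : ℤ), (shiftFunctor C n).Additive] [Pretriangulated C]

/-- A t-structure on a (pre)triangulated category, given as a pair of full subcategories
`(T^{≤0}, T^{≥0})` (as predicates on objects, closed under isomorphisms) satisfying the
axioms (t1), (t2), (t3) of Beilinson-Bernstein-Deligne.
Note that `Y ∈ T^{≥0}[-1]` is expressed as `Ge (Y⟦(1 : ℤ)⟧)` and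
`X ∈ T^{≥0}[1]` as `Ge (X⟦(-1 : ℤ)⟧)`. -/
structure IsTStructure (Le Ge : C → Prop) : Prop where
  le_iso : ∀ {X Y : C}, (X ≅ Y) → Le X → Le Y
  ge_iso : ∀ {X Y : C}, (X ≅ Y) → Ge X → Ge Y
  /-- (t1) : `Hom(X, Y) = 0` when `X ∈ T^{≤0}` and `Y ∈ T^{≥0}[-1]` -/
  hom_zero : ∀ {X Y : C}, Le X → Ge (Y⟦(1 : ℤ)⟧) → ∀ (f : X ⟶ Y), f = 0
  /-- (t2) : `T^{≤0}[1] ⊆ T^{≤0}` -/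
  le_shift : ∀ (X : C), Le X → Le (X⟦(1 : ℤ)⟧)
  /-- (t2) : `T^{≥0} ⊆ T^{≥0}[1]` -/
  ge_shift : ∀ (X : C), Ge X → Ge (X⟦(-1 : ℤ)⟧)
  /-- (t3) : every object `X` fits in a distinguished triangle `A ⟶ X ⟶ B ⟶ A[1]`
  with `A ∈ T^{≤0}` and `B ∈ T^{≥0}[-1]`. -/
  exists_triangle : ∀ (X : C), ∃ (A B : C) (f : A ⟶ X) (g : X ⟶ B) (h : B ⟶ A⟦(1 : ℤ)⟧),
    (Triangle.mk f g h ∈ distTriang C) ∧ Le A ∧ Ge (B⟦(1 : ℤ)⟧)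

/-- A pre-aisle: a full subcategory (predicate on objects, closed under isomorphisms)
stable under the shift `X ↦ X[1]` and under extensions. -/
structure IsPreAisle (U : C → Prop) : Prop where
  iso : ∀ {X Y : C}, (X ≅ Y) → U X → U Y
  shift : ∀ (X : C), U X → U (X⟦(1 : ℤ)⟧)
  ext : ∀ (T : Triangle C), (T ∈ distTriang C) → U T.obj₁ → U T.obj₃ → U T.obj₂

/-- A cocomplete pre-aisle: a pre-aisle closed under all existing small coproducts. -/
structure IsCocompletePreAisle (U : C → Prop) extends IsPreAisle U : Prop where
  coproduct : ∀ ⦃ι : Type v⦄ (X : ι → C) [HasCoproduct X], (∀ i, U (X i)) → U (∐ X)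

/-- The smallest cocomplete pre-aisle containing a given family `S` of objects:
the intersection of all cocomplete pre-aisles containing `S`. -/
def smallestCocompletePreAisle (S : C → Prop) : C → Prop :=
  fun X => ∀ (U : C → Prop), IsCocompletePreAisle U → (∀ Y, S Y → U Y) → U X

/-- `U` is an aisle if `(U, U^⊥[1])` is a t-structure; membership of `Y` in `U^⊥[1]`
is expressed as `Y⟦-1⟧ ∈ U^⊥`. -/
def IsAisle (U : C → Prop) : Prop :=
  IsTStructure U (fun Y => rightPerp U (Y⟦(-1 : ℤ)⟧))

/-- `E` is a generator of the triangulated category `C`: any object receiving only zero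
maps from all shifts of `E` is zero. -/
def IsGeneratorObj (E : C) : Prop :=
  ∀ (M : C), (∀ (n : ℤ) (f : E⟦n⟧ ⟶ M), f = 0) → IsZero M

end Triangulated

section Aux

variable {C : Type u} [Category.{v} C] [Preadditive C] [HasZeroObject C] [HasShift C ℤ]
  [∀ (n : ℤ), (shiftFunctor C n).Additive] [Pretriangulated C]

lemma rightPerp_of_iso {U : C → Prop} {X Y : C} (e : X ≅ Y) (h : rightPerp U X) :
    rightPerp U Y := by
  intro W hW f
  have h0 : f ≫ e.inv = 0 := h hW _
  calc f = (f ≫ e.inv) ≫ e.hom := by simp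
  _ = 0 := by rw [h0, zero_comp]

lemma rightPerp_shift_neg {U : C → Prop} (hU : IsPreAisle U) {B : C}
    (h : rightPerp U B) : rightPerp U (B⟦(-1 : ℤ)⟧) := by
  intro W hW f
  have h1 : f⟦(1 : ℤ)⟧' ≫ (shiftFunctorCompIsoId C (-1 : ℤ) (1 : ℤ)
      (by norm_num)).hom.app B = 0 := h (hU.shift W hW) _
  rw [CategoryTheory.Preadditive.IsIso.comp_right_eq_zero] at h1
  rwa [Functor.map_eq_zero_iff] at h1

/-- The key construction: if the inclusion of a pre-aisle has a right adjoint, then every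
object sits in a distinguished triangle with first vertex in `U` and third vertex in `U^⊥`. -/
lemma exists_triangle_of_adjunction {U : C → Prop} (hU : IsPreAisle U)
    {R : C ⥤ ObjectProperty.FullSubcategory U} (adj : ObjectProperty.ι U ⊣ R) (X : C) :
    ∃ (A B : C) (f : A ⟶ X) (g : X ⟶ B) (h : B ⟶ A⟦(1 : ℤ)⟧),
      (Triangle.mk f g h ∈ distTriang C) ∧ U A ∧ rightPerp U B := by
  set A : C := (R.obj X).obj with hAdef
  have hA : U A := (R.obj X).property
  let ε : A ⟶ X := adj.counit.app X
  have surj : ∀ (W : ObjectProperty.FullSubcategory U) (φ : W.obj ⟶ X), ∃ ψ : W.obj ⟶ A, ψ ≫ ε = φ := by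
    intro W φ
    refine ⟨(adj.homEquiv W X φ : W ⟶ R.obj X).hom, ?_⟩
    have h1 := adj.homEquiv_counit (X := W) (Y := X) (g := adj.homEquiv W X φ)
    have h2 : (adj.homEquiv W X).symm (adj.homEquiv W X φ) = φ := Equiv.symm_apply_apply _ _
    rw [h1] at h2
    exact h2
  have inj : ∀ (W : ObjectProperty.FullSubcategory U) (ψ ψ' : W.obj ⟶ A), ψ ≫ ε = ψ' ≫ ε → ψ = ψ' := by
    intro W ψ ψ' hh
    have h1 : (adj.homEquiv W X).symm (ObjectProperty.homMk ψ : W ⟶ R.obj X) =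
        (adj.homEquiv W X).symm (ObjectProperty.homMk ψ' : W ⟶ R.obj X) := by
      rw [adj.homEquiv_counit, adj.homEquiv_counit]
      exact hh
    exact congrArg InducedCategory.Hom.hom ((adj.homEquiv W X).symm.injective h1)
  obtain ⟨B, g, δ, mem⟩ := distinguished_cocone_triangle ε
  refine ⟨A, B, ε, g, δ, mem, hA, ?_⟩
  intro W hW f
  obtain ⟨E, a', p, mem'⟩ := distinguished_cocone_triangle₂ (f ≫ δ)
  have hE : U E := hU.ext _ mem' hA hW
  obtain ⟨φ, hφ₁, _⟩ := complete_distinguished_triangle_morphism₂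
    (Triangle.mk a' p (f ≫ δ)) (Triangle.mk ε g δ) mem' mem (𝟙 A) f
    (by erw [CategoryTheory.Functor.map_id, comp_id]; rfl)
  obtain ⟨φt, hφt⟩ := surj ⟨E, hE⟩ φ
  have hret : a' ≫ φt = 𝟙 A := by
    apply inj ⟨A, hA⟩
    rw [assoc, hφt]
    exact hφ₁
  have hw0 : (f ≫ δ) ≫ a'⟦(1 : ℤ)⟧' = 0 := by
    have h1 := comp_distTriang_mor_zero₂₃ _ (rot_of_distTriang _ mem')
    change (f ≫ δ) ≫ (-(a'⟦(1 : ℤ)⟧')) = 0 at h1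
    rw [Preadditive.comp_neg, neg_eq_zero] at h1
    exact h1
  have hfδ : f ≫ δ = 0 := by
    have h1 : ((f ≫ δ) ≫ a'⟦(1 : ℤ)⟧') ≫ φt⟦(1 : ℤ)⟧' = 0 := by rw [hw0, zero_comp]
    rwa [assoc, ← CategoryTheory.Functor.map_comp, hret, CategoryTheory.Functor.map_id, comp_id] at h1
  obtain ⟨h', hh'⟩ := Triangle.coyoneda_exact₃ _ mem f hfδ
  obtain ⟨ht, hht⟩ := surj ⟨W, hW⟩ h'
  have hz := comp_distTriang_mor_zero₁₂ _ mem
  change ε ≫ g = 0 at hz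
  rw [hh', ← hht]
  change (ht ≫ ε) ≫ g = 0
  rw [assoc, hz, comp_zero]

end Aux

/-- Keller-Vossieck. A pre-aisle `U` of a triangulated category is an aisle,
i.e. `(U, U^⊥[1])` is a t-structure, if and only if the canonical inclusion functor `U ↪ T`
has a right adjoint (i.e. is a left adjoint). -/
theorem isAisle_iff_inclusion_isLeftAdjoint {C : Type u} [Category.{v} C] [Preadditive C] [HasZeroObject C] [HasShift C ℤ]
    [∀ (n : ℤ), (shiftFunctor C n).Additive] [Pretriangulated C]
    (U : C → Prop) (hU : IsPreAisle U) :
    IsAisle U ↔ (ObjectProperty.ι U).IsLeftAdjoint := by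
  constructor
  · intro h
    rw [isLeftAdjoint_iff_hasTerminal_costructuredArrow]
    intro X
    obtain ⟨A, B, ε, g, δ, mem, hA, hB⟩ := h.exists_triangle X
    -- `hB : rightPerp U ((B⟦1⟧)⟦-1⟧)`, transport to `rightPerp U B`
    have hB' : rightPerp U B :=
      rightPerp_of_iso ((shiftFunctorCompIsoId C (1 : ℤ) (-1 : ℤ) (by norm_num)).app B) hB
    have hBm1 : rightPerp U (B⟦(-1 : ℤ)⟧) := rightPerp_shift_neg hU hB'
    have inj : ∀ (W : C), U W → ∀ (ψ ψ' : W ⟶ A), ψ ≫ ε = ψ' ≫ ε → ψ = ψ' := by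
      intro W hW ψ ψ' hh
      have h0 : (ψ - ψ') ≫ ε = 0 := by rw [Preadditive.sub_comp, hh, sub_self]
      obtain ⟨u, hu⟩ := Triangle.coyoneda_exact₂ _ (inv_rot_of_distTriang _ mem) (ψ - ψ') h0
      have hu0 : u = 0 := hBm1 hW u
      rw [hu0, zero_comp] at hu
      exact sub_eq_zero.mp hu
    have exist : ∀ (W : C), U W → ∀ (w : W ⟶ X), ∃ u : W ⟶ A, u ≫ ε = w := by
      intro W hW w
      have h0 : w ≫ g = 0 := hB' hW _
      obtain ⟨u, hu⟩ := Triangle.coyoneda_exact₂ _ mem w h0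
      exact ⟨u, hu.symm⟩
    have hterm : IsTerminal (CostructuredArrow.mk
        (S := ObjectProperty.ι U) (T := X) (Y := (⟨A, hA⟩ : ObjectProperty.FullSubcategory U)) ε) := ?_
    · exact hterm.hasTerminal
    have huniq : ∀ (Z : CostructuredArrow (ObjectProperty.ι U) X)
        (m m' : Z ⟶ CostructuredArrow.mk
          (S := ObjectProperty.ι U) (T := X)
          (Y := (⟨A, hA⟩ : ObjectProperty.FullSubcategory U)) ε), m = m' := by
      intro Z m m'
      ext
      exact inj Z.left.obj Z.left.property _ _
        ((CostructuredArrow.w m).trans (CostructuredArrow.w m').symm)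
    exact IsTerminal.ofUniqueHom (fun Z =>
      CostructuredArrow.homMk
        (ObjectProperty.homMk (exist Z.left.obj Z.left.property Z.hom).choose :
          Z.left ⟶ (⟨A, hA⟩ : ObjectProperty.FullSubcategory U))
        (by simpa using (exist Z.left.obj Z.left.property Z.hom).choose_spec))
      (fun Z m => huniq Z m _)
  · intro h
    let adj := Adjunction.ofIsLeftAdjoint (ObjectProperty.ι U)
    constructor
    · exact fun e hX => hU.iso e hX
    · intro X Y e hX
      exact rightPerp_of_iso ((shiftFunctor C (-1 : ℤ)).mapIso e) hX
    · intro X Y hX hY f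
      have h0 : f ≫ (shiftFunctorCompIsoId C (1 : ℤ) (-1 : ℤ)
          (by norm_num)).inv.app Y = 0 := hY hX _
      rw [CategoryTheory.Preadditive.IsIso.comp_right_eq_zero] at h0
      exact h0
    · exact hU.shift
    · intro X hX
      exact rightPerp_shift_neg hU hX
    · intro X
      obtain ⟨A, B, f, g, hh, mem, hA, hB⟩ := exists_triangle_of_adjunction hU adj X
      exact ⟨A, B, f, g, hh, mem, hA,
        rightPerp_of_iso ((shiftFunctorCompIsoId C (1 : ℤ) (-1 : ℤ)
          (by norm_num)).app B).symm hB⟩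

end Paper
end

section
/- Let T be a triangulated category with arbitrary small coproducts, S = {E_α : α ∈ A} a set of objects of T, and U the smallest cocomplete pre-aisle of T containing all objects of S. Then for an object B of T, one has Hom_T(E_α[j], B) = 0 for every j ≥ 0 and every α ∈ A if, and only if, B belongs to U^⊥. -/
/-!
For fixed `B`, the objects `X` with `Hom(X[n], B) = 0` for all `n ≥ 0` form a cocomplete
pre-aisle: extensions are handled by the exactness of `Hom(-, B)` on the shifted triangle, and
coproducts because the shift, being an equivalence, preserves them. If all `E_α` lie in it, so
does every object of `U`, and `n = 0` gives `B ∈ U^⊥`. Conversely `U` contains every `E_α[j]`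
with `j ≥ 0`.
-/

open CategoryTheory Category Limits Pretriangulated

universe v u

namespace Paper

section LeftOrthogonal

variable {C : Type u} [Category.{v} C] [HasZeroMorphisms C] [HasShift C ℤ]

def shiftsLeftOrthogonal (B : C) : C → Prop :=
  fun X => ∀ n : ℤ, 0 ≤ n → ∀ g : X⟦n⟧ ⟶ B, g = 0

variable (B : C)

lemma shiftsLeftOrthogonal_of_iso {X Y : C} (e : X ≅ Y) (hX : shiftsLeftOrthogonal B X) :
    shiftsLeftOrthogonal B Y :=
  fun n hn _ => zero_of_epi_comp (e.hom⟦n⟧') (hX n hn _)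

lemma shiftsLeftOrthogonal_shift {X : C} (hX : shiftsLeftOrthogonal B X) :
    shiftsLeftOrthogonal B (X⟦(1 : ℤ)⟧) :=
  fun n hn _ => zero_of_epi_comp ((shiftFunctorAdd C 1 n).hom.app X) (hX (1 + n) (by omega) _)

lemma shiftsLeftOrthogonal_coproduct {ι : Type v} (X : ι → C) [HasCoproduct X]
    (hX : ∀ i, shiftsLeftOrthogonal B (X i)) : shiftsLeftOrthogonal B (∐ X) := by
  intro n hn g
  refine (isColimitOfPreserves (shiftFunctor C n) (colimit.isColimit _)).hom_ext fun ⟨i⟩ => ?_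
  simpa using hX i n hn ((Sigma.ι X i)⟦n⟧' ≫ g)

end LeftOrthogonal

section Triangulated

variable {C : Type u} [Category.{v} C] [Preadditive C] [HasZeroObject C] [HasShift C ℤ]
  [∀ (n : ℤ), (shiftFunctor C n).Additive] [Pretriangulated C]

lemma hom_obj₂_eq_zero_of_distTriang {T : Triangle C} (hT : T ∈ distTriang C) {B : C}
    (h₁ : ∀ g : T.obj₁ ⟶ B, g = 0) (h₃ : ∀ g : T.obj₃ ⟶ B, g = 0) (g : T.obj₂ ⟶ B) : g = 0 := by
  obtain ⟨k, rfl⟩ := Triangle.yoneda_exact₂ T hT g (h₁ _)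
  rw [h₃ k, comp_zero]

lemma shiftsLeftOrthogonal_ext (B : C) {T : Triangle C} (hT : T ∈ distTriang C)
    (h₁ : shiftsLeftOrthogonal B T.obj₁) (h₃ : shiftsLeftOrthogonal B T.obj₃) :
    shiftsLeftOrthogonal B T.obj₂ := fun n hn =>
  hom_obj₂_eq_zero_of_distTriang (Triangle.shift_distinguished T hT n) (h₁ n hn) (h₃ n hn)

lemma isCocompletePreAisle_shiftsLeftOrthogonal (B : C) :
    IsCocompletePreAisle (shiftsLeftOrthogonal B) where
  iso e := shiftsLeftOrthogonal_of_iso B e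
  shift _ := shiftsLeftOrthogonal_shift B
  ext _ := shiftsLeftOrthogonal_ext B
  coproduct {_} X _ := shiftsLeftOrthogonal_coproduct B X

lemma IsPreAisle.shift_mem {U : C → Prop} (hU : IsPreAisle U) {X : C} (hX : U X) {j : ℤ}
    (hj : 0 ≤ j) : U (X⟦j⟧) := by
  induction j, hj using Int.leInduction with
  | base => exact hU.iso ((shiftFunctorZero C ℤ).app X).symm hX
  | succ j _ ih => exact hU.iso ((shiftFunctorAdd C j 1).app X).symm (hU.shift _ ih)

end Triangulated

theorem rightPerp_smallestCocompletePreAisle_iff_general {C : Type u} [Category.{v} C] [Preadditive C] [HasZeroObject C] [HasShift C ℤ]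
    [∀ (n : ℤ), (shiftFunctor C n).Additive] [Pretriangulated C]
    {A : Type v} (E : A → C) (B : C) :
    (∀ (j : ℤ), 0 ≤ j → ∀ (α : A) (f : (E α)⟦j⟧ ⟶ B), f = 0) ↔
      rightPerp (smallestCocompletePreAisle (fun X => ∃ α, E α = X)) B := by
  constructor
  · intro h X hX f
    have hXB : shiftsLeftOrthogonal B X :=
      hX _ (isCocompletePreAisle_shiftsLeftOrthogonal B) fun _ ⟨α, hα⟩ n hn => hα ▸ h n hn α
    exact zero_of_epi_comp ((shiftFunctorZero C ℤ).hom.app X) (hXB 0 le_rfl _)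
  · intro h j hj α f
    exact h (fun U hU hS => hU.shift_mem (hS _ ⟨α, rfl⟩) hj) f

/-- Let `T` be a triangulated category with small coproducts,
`S = {E_α : α ∈ A}` a set of objects, and `U` the smallest cocomplete pre-aisle containing `S`.
Then `Hom(E_α[j], B) = 0` for all `j ≥ 0` and all `α` if and only if `B ∈ U^⊥`. -/
theorem rightPerp_smallestCocompletePreAisle_iff {C : Type u} [Category.{v} C] [Preadditive C] [HasZeroObject C] [HasShift C ℤ]
    [∀ (n : ℤ), (shiftFunctor C n).Additive] [Pretriangulated C]
    [HasCoproducts.{v} C]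
    {A : Type v} (E : A → C) (B : C) :
    (∀ (j : ℤ), 0 ≤ j → ∀ (α : A) (f : (E α)⟦j⟧ ⟶ B), f = 0) ↔
      rightPerp (smallestCocompletePreAisle (fun X => ∃ α, E α = X)) B :=
  rightPerp_smallestCocompletePreAisle_iff_general E B

end Paper
end

section
/- Let T be a triangulated category with arbitrary small coproducts, E a compact object of T, and U the smallest cocomplete pre-aisle of T containing E. Then Hom_T(E, X[j]) = 0 for all j > 0 and all X ∈ U if, and only if, Hom_T(E, E[j]) = 0 for all j > 0. -/
open CategoryTheory Category Limits Pretriangulated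

universe v u

namespace Paper

/-- Let `T` be a triangulated category with small coproducts, `E` a compact
object and `U` the smallest cocomplete pre-aisle containing `E`. Then `Hom(E, X[j]) = 0` for all
`j > 0` and all `X ∈ U` if and only if `Hom(E, E[j]) = 0` for all `j > 0`. -/
theorem hom_shift_vanishing_on_preaisle_iff {C : Type u} [Category.{v} C] [Preadditive C] [HasZeroObject C] [HasShift C ℤ]
    [∀ (n : ℤ), (shiftFunctor C n).Additive] [Pretriangulated C]
    [HasCoproducts.{v} C]
    (E : C) (hE : IsCompactObj E) :
    (∀ (j : ℤ), 0 < j → ∀ (X : C), smallestCocompletePreAisle (fun Y => Y = E) X →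
        ∀ (f : E ⟶ X⟦j⟧), f = 0) ↔
      (∀ (j : ℤ), 0 < j → ∀ (f : E ⟶ E⟦j⟧), f = 0) := by
  constructor
  · intro h j hj f
    exact h j hj E (fun U _ hS => hS E rfl) f
  · intro h j hj X hX f
    -- the subcategory of objects X with Hom(E, X[j]) = 0 for all j > 0
    set V : C → Prop := fun X => ∀ (j : ℤ), 0 < j → ∀ (f : E ⟶ X⟦j⟧), f = 0 with hV
    have hVaisle : IsCocompletePreAisle V := by
      constructor
      · constructor
        · intro X Y e hXV j hj f
          have : f ≫ (shiftFunctor C j).map e.inv = 0 := hXV j hj _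
          have := this =≫ (shiftFunctor C j).map e.hom
          simpa [← Functor.map_comp] using this
        · intro X hXV j hj f
          have h1 : f ≫ (shiftFunctorAdd C 1 j).inv.app X = 0 := hXV (1 + j) (by omega) _
          have := h1 =≫ (shiftFunctorAdd C 1 j).hom.app X
          simpa using this
        · intro T hT hT1 hT3 j hj f
          have hdist := Triangle.shift_distinguished T hT j
          have hf2 : f ≫ ((CategoryTheory.shiftFunctor (Triangle C) j).obj T).mor₂ = 0 := by
            have : ((CategoryTheory.shiftFunctor (Triangle C) j).obj T).mor₂ =
                (j.negOnePow : ℤ) • (shiftFunctor C j).map T.mor₂ := rfl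
            erw [this, Preadditive.comp_zsmul]
            have : f ≫ (shiftFunctor C j).map T.mor₂ = 0 := hT3 j hj _
            erw [this]; exact smul_zero (A := E ⟶ (shiftFunctor C j).obj T.obj₃) _
          obtain ⟨g, hg⟩ := Triangle.coyoneda_exact₂ _ hdist f hf2
          rw [hg, hT1 j hj g]; exact zero_comp
      · intro ι X _ hXi j hj f
        have hiso : IsIso (sigmaComparison (shiftFunctor C j) X) := inferInstance
        have h1 : (f ≫ inv (sigmaComparison (shiftFunctor C j) X)) ≫
            sigmaComparison (shiftFunctor C j) X = f := by simp
        obtain ⟨s, g, hg⟩ := hE (fun i => (X i)⟦j⟧)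
          (f ≫ inv (sigmaComparison (shiftFunctor C j) X))
        have hgz : ∀ i ∈ s, g i ≫ Sigma.ι (fun i => (X i)⟦j⟧) i = 0 := by
          intro i _
          rw [hXi i j hj (g i), zero_comp]
        rw [← h1, hg, Finset.sum_congr rfl hgz, Finset.sum_const, smul_zero, zero_comp]
    exact hX V hVaisle (fun Y hY => by subst hY; exact h) j hj f

end Paper
end
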